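/- For every integer k ≥ 2, with κ_p := | 2^{1−p} · e^{2πi/p²} · ( e^{−2πi/p²} (1 + e^{2πi/p²}) )^p / (1 + e^{2πi/p²}) |, one has κ_k < κ_{k+1}; that is, the sequence (κ_p)_{p ≥ 2} is strictly increasing. -/

import Mathlib

/-- The per-party contraction factor of the Modular XOR game under the Hamming
bit-to-p-ary encoding. -/
noncomputable def kappa (p : ℕ) : ℝ :=
  ‖((2 : ℂ) ^ ((1 : ℤ) - (p : ℤ)) *
      Complex.exp (2 * (Real.pi : ℂ) * Complex.I / (p : ℂ) ^ 2) *
      (Complex.exp (-(2 * (Real.pi : ℂ) * Complex.I / (p : ℂ) ^ 2)) *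
          (1 + Complex.exp (2 * (Real.pi : ℂ) * Complex.I / (p : ℂ) ^ 2))) ^ p /
      (1 + Complex.exp (2 * (Real.pi : ℂ) * Complex.I / (p : ℂ) ^ 2)))‖

open Real

/-! ### Auxiliary lemmas: closed form for `kappa` -/

lemma aux_half (x : ℝ) :
    (1 : ℂ) + Complex.exp (((2*x : ℝ) : ℂ) * Complex.I) =
      Complex.exp (((x:ℝ) : ℂ) * Complex.I) * (2 * (Real.cos x : ℂ)) := by
  rw [Complex.ofReal_cos, Complex.cos]
  have h2 : ((2*x:ℝ):ℂ) * Complex.I = (x:ℝ) * Complex.I + (x:ℝ) * Complex.I := by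
    push_cast; ring
  have key : Complex.exp ((x:ℂ)*Complex.I) * Complex.exp (-(x:ℂ)*Complex.I) = 1 := by
    rw [← Complex.exp_add]; norm_num
  rw [h2, Complex.exp_add]
  linear_combination -key

lemma abs_aux (x : ℝ) (h0 : 0 ≤ x) (h1 : x ≤ 1) :
    ‖(1 + Complex.exp (((2*x:ℝ):ℂ) * Complex.I))‖ = 2 * Real.cos x := by
  have hc : 0 ≤ Real.cos x :=
    Real.cos_nonneg_of_mem_Icc ⟨by linarith [Real.pi_gt_three], by linarith [Real.pi_gt_three]⟩
  rw [aux_half, norm_mul, Complex.norm_exp_ofReal_mul_I, one_mul]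
  have h : (2 : ℂ) * (Real.cos x : ℂ) = ((2*Real.cos x : ℝ) : ℂ) := by push_cast; ring
  rw [h, Complex.norm_real, Real.norm_eq_abs, abs_of_nonneg (by linarith)]

lemma kappa_eq (p : ℕ) (hp : 2 ≤ p) :
    kappa p = Real.cos (Real.pi / (p:ℝ)^2) ^ (p - 1) := by
  have hp0 : (0:ℝ) < (p:ℝ) := by positivity
  have hp4 : (4:ℝ) ≤ (p:ℝ)^2 := by
    have : (2:ℝ) ≤ (p:ℝ) := by exact_mod_cast hp
    nlinarith
  set x : ℝ := Real.pi / (p:ℝ)^2 with hxdef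
  have hx0 : 0 < x := by positivity
  have hx1 : x ≤ 1 := by
    rw [hxdef, div_le_one (by positivity)]
    nlinarith [Real.pi_lt_four]
  have hc : 0 < Real.cos x := by
    apply Real.cos_pos_of_mem_Ioo
    constructor <;> nlinarith [Real.pi_gt_three]
  have hpc : ((p:ℂ))^2 ≠ 0 := by
    simp [pow_ne_zero, Nat.cast_ne_zero]
    omega
  have harg : 2 * (Real.pi:ℂ) * Complex.I / (p:ℂ)^2 = ((2*x:ℝ):ℂ) * Complex.I := by
    rw [hxdef]
    push_cast
    field_simp
  have hneg : -(((2*x:ℝ):ℂ) * Complex.I) = ((-(2*x):ℝ):ℂ) * Complex.I := by push_cast; ring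
  unfold kappa
  rw [harg, norm_div, norm_mul, norm_mul, norm_pow, norm_mul, norm_zpow,
    Complex.norm_exp_ofReal_mul_I, hneg, Complex.norm_exp_ofReal_mul_I,
    abs_aux x hx0.le hx1, Complex.norm_two]
  have hpow : Real.cos x ^ p = Real.cos x ^ (p-1) * Real.cos x := by
    rw [← pow_succ]; congr 1; omega
  rw [one_mul, mul_one, zpow_sub₀ (two_ne_zero), zpow_one, zpow_natCast, mul_pow, hpow]
  field_simp

/-! ### Auxiliary lemmas: the strict monotonicity inequality -/

lemma poly2 (K : ℝ) (hK : 2 ≤ K) :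
    K^9*(48*(K+1)^4+50) < (K-1)*(48*K^4-50)*((K+1)^8-5*(K+1)^4-6) := by
  have h : 0 ≤ K - 2 := by linarith
  nlinarith [pow_nonneg h 2, pow_nonneg h 3, pow_nonneg h 4, pow_nonneg h 5,
    pow_nonneg h 6, pow_nonneg h 7, pow_nonneg h 8, pow_nonneg h 9,
    pow_nonneg h 10, pow_nonneg h 11, pow_nonneg h 12, h]

lemma pisq_le : Real.pi^2 ≤ 10 := by nlinarith [Real.pi_lt_d2, Real.pi_gt_three]
lemma pisq_ge : (9:ℝ) ≤ Real.pi^2 := by nlinarith [Real.pi_gt_three]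
lemma pi4_le : Real.pi^4 ≤ 100 := by nlinarith [pisq_le, pisq_ge]
lemma powK4 (K : ℝ) (hK : 2 ≤ K) : 16 ≤ K^4 := by nlinarith [sq_nonneg (K^2-4), sq_nonneg (K-2)]
lemma powM4 (M : ℝ) (hM : 3 ≤ M) : 81 ≤ M^4 := by
  nlinarith [sq_nonneg (M^2-9), sq_nonneg (M-3)]
lemma powM8 (M : ℝ) (hM : 3 ≤ M) : 81*M^4 ≤ M^8 := by
  nlinarith [powM4 M hM, pow_nonneg (show (0:ℝ) ≤ M by linarith) 4]

lemma L1gen (K a c : ℝ) (hA1 : c ≤ 1 - a^2/2 + a^4*(5/96))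
    (ha2' : a^2*K^8 = Real.pi^2*K^4) (ha4' : a^4*K^8 = Real.pi^4) :
    48*Real.pi^2*K^4 - 5*Real.pi^4 ≤ 96*K^8*(1-c) := by
  have hK8 : (0:ℝ) ≤ 96*K^8 := by positivity
  have h := mul_le_mul_of_nonneg_left hA1 hK8
  linarith [h, ha2', ha4']

lemma L2gen (M b c : ℝ) (hB2 : 1 - b^2/2 - b^4*(5/96) ≤ c)
    (hb2' : b^2*M^8 = Real.pi^2*M^4) (hb4' : b^4*M^8 = Real.pi^4) :
    96*M^8*(1-c) ≤ 48*Real.pi^2*M^4 + 5*Real.pi^4 := by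
  have hM8 : (0:ℝ) ≤ 96*M^8 := by positivity
  have h := mul_le_mul_of_nonneg_left hB2 hM8
  linarith [h, hb2', hb4']

lemma L3gen (M b c : ℝ) (hB2 : 1 - b^2/2 - b^4*(5/96) ≤ c)
    (hb2' : b^2*M^8 = Real.pi^2*M^4) (hb4' : b^4*M^8 = Real.pi^4) :
    96*M^8 - 48*Real.pi^2*M^4 - 5*Real.pi^4 ≤ 96*M^8*c := by
  have hM8 : (0:ℝ) ≤ 96*M^8 := by positivity
  have h := mul_le_mul_of_nonneg_left hB2 hM8
  linarith [h, hb2', hb4']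

lemma key_ineq (K M a b c₁ c₂ : ℝ) (hK : 2 ≤ K) (hMdef : M = K+1)
    (hA1 : c₁ ≤ 1 - a^2/2 + a^4*(5/96)) (hB2 : 1 - b^2/2 - b^4*(5/96) ≤ c₂)
    (ha2' : a^2*K^8 = Real.pi^2*K^4) (ha4' : a^4*K^8 = Real.pi^4)
    (hb2' : b^2*M^8 = Real.pi^2*M^4) (hb4' : b^4*M^8 = Real.pi^4) :
    K*(1-c₂) < (K-1)*(1-c₁)*c₂ := by
  have hM : 3 ≤ M := by rw [hMdef]; linarith
  have hK0 : (0:ℝ) < K := by linarith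
  have hM0 : (0:ℝ) < M := by linarith
  have hK4 := powK4 K hK
  have hM4 := powM4 M hM
  have hM8 := powM8 M hM
  have L1 := L1gen K a c₁ hA1 ha2' ha4'
  have L2 := L2gen M b c₂ hB2 hb2' hb4'
  have L3 := L3gen M b c₂ hB2 hb2' hb4'
  clear hA1 hB2 ha2' ha4' hb2' hb4'
  have hpm : Real.pi^2*M^4 ≤ 10*M^4 :=
    mul_le_mul_of_nonneg_right pisq_le (by positivity)
  have hpk : (9:ℝ)*16 ≤ Real.pi^2*K^4 :=
    mul_le_mul pisq_ge hK4 (by norm_num) (by positivity)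
  have hX0 : 0 ≤ 48*Real.pi^2*K^4 - 5*Real.pi^4 := by linarith [pi4_le]
  have hY0 : 0 ≤ 96*M^8 - 48*Real.pi^2*M^4 - 5*Real.pi^4 := by
    linarith [hpm, hM8, hM4, pi4_le]
  have hC : (0:ℝ) < 96*K^8*(96*M^8) := by positivity
  have S' : 96*K^8*(96*M^8) * (K*(1-c₂)) < 96*K^8*(96*M^8) * ((K-1)*(1-c₁)*c₂) := by
    calc 96*K^8*(96*M^8) * (K*(1-c₂))
        = 96*K^9 * (96*M^8*(1-c₂)) := by ring
      _ ≤ 96*K^9 * (48*Real.pi^2*M^4 + 5*Real.pi^4) := by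
          apply mul_le_mul_of_nonneg_left L2 (by positivity)
      _ = Real.pi^2 * (K^9*(48*M^4 + 5*Real.pi^2)) * 96 := by ring
      _ ≤ Real.pi^2 * (K^9*(48*M^4 + 50)) * 96 := by
          have h1 : K^9*(48*M^4 + 5*Real.pi^2) ≤ K^9*(48*M^4 + 50) := by
            apply mul_le_mul_of_nonneg_left (by linarith [pisq_le]) (by positivity)
          linarith [mul_le_mul_of_nonneg_left h1 (show (0:ℝ) ≤ Real.pi^2 by positivity)]
      _ < Real.pi^2 * ((K-1)*(48*K^4-50)*(M^8-5*M^4-6)) * 96 := by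
          have h2 : K^9*(48*M^4+50) < (K-1)*(48*K^4-50)*(M^8-5*M^4-6) := by
            rw [hMdef]; exact poly2 K hK
          have := mul_lt_mul_of_pos_left h2 (show (0:ℝ) < Real.pi^2 by positivity)
          linarith [this]
      _ ≤ Real.pi^2 * ((K-1)*((48*K^4-5*Real.pi^2)*(96*M^8-48*Real.pi^2*M^4-5*Real.pi^4))) := by
          have f1 : (0:ℝ) ≤ 48*K^4-50 := by linarith
          have f2 : (0:ℝ) ≤ (M^8-5*M^4-6)*96 := by linarith [hM8, hM4]
          have g1 : 48*K^4-50 ≤ 48*K^4-5*Real.pi^2 := by linarith [pisq_le]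
          have g2 : (M^8-5*M^4-6)*96 ≤ 96*M^8-48*Real.pi^2*M^4-5*Real.pi^4 := by
            linarith [hpm, pi4_le]
          have t1 := mul_le_mul g1 g2 f2 (by linarith)
          have t2 := mul_le_mul_of_nonneg_left t1 (show (0:ℝ) ≤ K-1 by linarith)
          linarith [mul_le_mul_of_nonneg_left t2 (show (0:ℝ) ≤ Real.pi^2 by positivity)]
      _ = (K-1) * ((48*Real.pi^2*K^4-5*Real.pi^4) * (96*M^8-48*Real.pi^2*M^4-5*Real.pi^4)) := by
          ring
      _ ≤ (K-1) * ((96*K^8*(1-c₁)) * (96*M^8*c₂)) := by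
          apply mul_le_mul_of_nonneg_left _ (show (0:ℝ) ≤ K-1 by linarith)
          apply mul_le_mul L1 L3 hY0 (by linarith [L1])
      _ = 96*K^8*(96*M^8) * ((K-1)*(1-c₁)*c₂) := by ring
  exact (mul_lt_mul_iff_right₀ hC).mp S'

lemma cos_pow_lt (k : ℕ) (hk : 2 ≤ k) :
    Real.cos (Real.pi / (k:ℝ)^2) ^ (k-1) < Real.cos (Real.pi / ((k:ℝ)+1)^2) ^ k := by
  set K : ℝ := (k:ℝ) with hKdef
  have hK : 2 ≤ K := by rw [hKdef]; exact_mod_cast hk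
  set M : ℝ := K + 1 with hMdef
  have hM : 3 ≤ M := by rw [hMdef]; linarith
  have hK0 : (0:ℝ) < K := by linarith
  have hM0 : (0:ℝ) < M := by linarith
  have hpi3 : (3:ℝ) < Real.pi := Real.pi_gt_three
  have hpi315 : Real.pi < 3.15 := Real.pi_lt_d2
  have hK2 : (4:ℝ) ≤ K^2 := by nlinarith
  have hM2 : (9:ℝ) ≤ M^2 := by nlinarith
  set a : ℝ := Real.pi / K^2 with hadef
  set b : ℝ := Real.pi / M^2 with hbdef
  clear_value K M a b
  have ha0 : 0 < a := by rw [hadef]; positivity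
  have hb0 : 0 < b := by rw [hbdef]; positivity
  have ha1 : a ≤ 1 := by
    rw [hadef, div_le_one (by positivity)]; linarith
  have hb1 : b ≤ 1 := by
    rw [hbdef, div_le_one (by positivity)]; linarith
  have hc1pos : 0 < Real.cos a := by
    apply Real.cos_pos_of_mem_Ioo; constructor <;> linarith
  have hc2pos : 0 < Real.cos b := by
    apply Real.cos_pos_of_mem_Ioo; constructor <;> linarith
  have hA := Real.cos_bound (x := a) (by rw [abs_of_pos ha0]; exact ha1)
  have hB := Real.cos_bound (x := b) (by rw [abs_of_pos hb0]; exact hb1)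
  rw [abs_of_pos ha0] at hA
  rw [abs_of_pos hb0] at hB
  have hA' := abs_le.mp hA
  have hB' := abs_le.mp hB
  have hA1 : Real.cos a ≤ 1 - a^2/2 + a^4*(5/96) := by linarith [hA'.2]
  have hB2 : 1 - b^2/2 - b^4*(5/96) ≤ Real.cos b := by linarith [hB'.1]
  have ha2' : a^2*K^8 = Real.pi^2*K^4 := by
    rw [hadef]; field_simp
  have ha4' : a^4*K^8 = Real.pi^4 := by
    rw [hadef]; field_simp
  have hb2' : b^2*M^8 = Real.pi^2*M^4 := by
    rw [hbdef]; field_simp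
  have hb4' : b^4*M^8 = Real.pi^4 := by
    rw [hbdef]; field_simp
  have key := key_ineq K M a b (Real.cos a) (Real.cos b) hK hMdef hA1 hB2 ha2' ha4' hb2' hb4'
  clear hA hB hA' hB' hA1 hB2 ha2' ha4' hb2' hb4' hadef hbdef ha0 hb0 ha1 hb1
  -- conclude via logarithms
  have e1 : Real.cos a ^ (k-1) = Real.exp (((k-1:ℕ):ℝ) * Real.log (Real.cos a)) := by
    rw [← Real.log_pow, Real.exp_log (pow_pos hc1pos _)]
  have e2 : Real.cos b ^ k = Real.exp ((k:ℝ) * Real.log (Real.cos b)) := by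
    rw [← Real.log_pow, Real.exp_log (pow_pos hc2pos _)]
  rw [e1, e2]
  apply Real.exp_lt_exp.mpr
  have hcast : ((k-1:ℕ):ℝ) = K - 1 := by
    rw [Nat.cast_sub (by omega)]; rw [hKdef]; norm_num
  rw [hcast, ← hKdef]
  have l1 : Real.log (Real.cos a) ≤ Real.cos a - 1 := Real.log_le_sub_one_of_pos hc1pos
  have l2 : 1 - (Real.cos b)⁻¹ ≤ Real.log (Real.cos b) := Real.one_sub_inv_le_log_of_pos hc2pos
  have step1 : (K-1) * Real.log (Real.cos a) ≤ (K-1)*(Real.cos a - 1) :=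
    mul_le_mul_of_nonneg_left l1 (by linarith)
  have step2 : K * (1 - (Real.cos b)⁻¹) ≤ K * Real.log (Real.cos b) :=
    mul_le_mul_of_nonneg_left l2 (by linarith)
  have mid : (K-1)*(Real.cos a - 1) < K * (1 - (Real.cos b)⁻¹) := by
    have hrw : (1:ℝ) - (Real.cos b)⁻¹ = (Real.cos b - 1)/Real.cos b := by
      field_simp
    rw [hrw, ← mul_div_assoc, lt_div_iff₀ hc2pos]
    linarith [key]
  linarith

/-- The sequence `(κ_p)_{p ≥ 2}` is strictly increasing. -/
theorem stmt_6 (k : ℕ) (hk : 2 ≤ k) : kappa k < kappa (k + 1) := by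
  rw [kappa_eq k hk, kappa_eq (k+1) (by omega)]
  have h := cos_pow_lt k hk
  have hc : ((k+1 : ℕ):ℝ) = (k:ℝ) + 1 := by push_cast; ring
  have he : (k+1) - 1 = k := by omega
  rw [hc, he]
  exact h
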